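/- Let G be a finite group of order divisible by 2^d with |G| = 2^d m, m odd. Then in any normal Cayley graph of G, a set of pairwise strongly cospectral vertices has size at most 2^d. -/

import Mathlib

/-! Right translations are automorphisms of a Cayley graph, and so are left translations when the
connection set is closed under conjugation. An automorphism fixes every spectral idempotent (these
are unique), so it preserves strong cospectrality together with the signs `E e_u = ± E e_v`. Hence
the vertices strongly cospectral to `1` form a subgroup `H`, and a strongly cospectral set lies in a
right coset of `H`. If `1` and `v` are strongly cospectral, left translation by `v` carries the pair
to `(v, v²)` with the same signs, so `E e_{v²} = E e_1` for every spectral idempotent `E`; since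
these idempotents separate vectors, `v² = 1`. Thus `H` is a `2`-group, and `|H|` divides
`2 ^ d * m` with `m` odd. -/

open Matrix

/-- `E` is the orthogonal projection onto the eigenspace of `A` for the eigenvalue `μ`. -/
def IsEigenProjection {V : Type*} [Fintype V] (A : Matrix V V ℝ) (μ : ℝ)
    (E : Matrix V V ℝ) : Prop :=
  E * E = E ∧ E.IsSymm ∧
    (∀ x : V → ℝ, A.mulVec (E.mulVec x) = μ • E.mulVec x) ∧
    (∀ y : V → ℝ, A.mulVec y = μ • y → E.mulVec y = y)

/-- Vertices `u` and `v` are strongly cospectral: `E e_u = ± E e_v` for every spectral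
idempotent `E` of `A`. -/
def StronglyCospectral {V : Type*} [Fintype V] [DecidableEq V]
    (A : Matrix V V ℝ) (u v : V) : Prop :=
  ∀ (μ : ℝ) (E : Matrix V V ℝ), IsEigenProjection A μ E →
    E.mulVec (Pi.single u 1) = E.mulVec (Pi.single v 1) ∨
    E.mulVec (Pi.single u 1) = -E.mulVec (Pi.single v 1)

/-- The adjacency matrix of the Cayley graph `X(G, C)`: `g ~ h` iff `h * g⁻¹ ∈ C`. -/
def cayleyAdj {G : Type*} [Group G] [Fintype G] [DecidableEq G] (C : Finset G) :
    Matrix G G ℝ :=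
  Matrix.of fun g h => if h * g⁻¹ ∈ C then 1 else 0

section EigenProjection

variable {V : Type*} [Fintype V] {A : Matrix V V ℝ} {μ : ℝ} {E F : Matrix V V ℝ}

namespace IsEigenProjection

theorem mul_eq_right (hE : IsEigenProjection A μ E) (hF : IsEigenProjection A μ F) :
    E * F = F :=
  ext_iff_mulVec.mpr fun x => by rw [← mulVec_mulVec]; exact hE.2.2.2 _ (hF.2.2.1 x)

theorem unique (hE : IsEigenProjection A μ E) (hF : IsEigenProjection A μ F) : E = F := by
  have hFE := congrArg transpose (hF.mul_eq_right hE)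
  rw [transpose_mul, hE.2.1.eq, hF.2.1.eq] at hFE
  rw [← hFE, hE.mul_eq_right hF]

theorem submatrix {W : Type*} [Fintype W] (hE : IsEigenProjection A μ E) (σ : W ≃ V) :
    IsEigenProjection (A.submatrix σ σ) μ (E.submatrix σ σ) := by
  obtain ⟨hidem, hsymm, hrange, hfix⟩ := hE
  refine ⟨by rw [submatrix_mul_equiv, hidem], hsymm.submatrix σ, fun x => ?_, fun y hy => ?_⟩
  · rw [submatrix_mulVec_equiv, submatrix_mulVec_equiv, Function.comp_assoc,
      σ.self_comp_symm, Function.comp_id, hrange]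
    rfl
  · rw [submatrix_mulVec_equiv] at hy
    have hy' : A *ᵥ (y ∘ σ.symm) = μ • (y ∘ σ.symm) := funext fun i => by
      simpa using congrFun hy (σ.symm i)
    rw [submatrix_mulVec_equiv, hfix _ hy']
    simp [Function.comp_def]

theorem submatrix_eq_self (hE : IsEigenProjection A μ E) {σ : V ≃ V}
    (hσ : A.submatrix σ σ = A) : E.submatrix σ σ = E :=
  (hσ ▸ hE.submatrix σ).unique hE

theorem mulVec_single_equiv [DecidableEq V] (hE : IsEigenProjection A μ E) {σ : V ≃ V}
    (hσ : A.submatrix σ σ = A) (u : V) :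
    E *ᵥ Pi.single (σ u) 1 = (E *ᵥ Pi.single u 1) ∘ σ.symm := by
  funext i
  conv_rhs => rw [← hE.submatrix_eq_self hσ]
  simp

end IsEigenProjection

theorem isEigenProjection_unitary_mul_diagonal_mul_star {U : Matrix V V ℝ} {d : V → ℝ}
    [DecidableEq V] (hU : U ∈ unitaryGroup V ℝ) (hA : A = U * diagonal d * star U) (μ : ℝ) :
    IsEigenProjection A μ (U * diagonal (fun i => if d i = μ then 1 else 0) * star U) := by
  subst hA
  set χ : Matrix V V ℝ := diagonal fun i => if d i = μ then 1 else 0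
  have hUU : star U * U = 1 := (mem_unitaryGroup_iff').mp hU
  have hχχ : χ * χ = χ := by
    rw [diagonal_mul_diagonal]; congr 1; funext i; split_ifs <;> simp
  have hdχ : diagonal d * χ = μ • χ := by
    rw [diagonal_mul_diagonal, ← diagonal_smul]
    congr 1; funext i; split_ifs with h <;> simp [h]
  have hAP : U * diagonal d * star U * (U * χ * star U) = μ • (U * χ * star U) :=
    calc _ = U * (diagonal d * (star U * U) * χ) * star U := by simp only [mul_assoc]
      _ = μ • (U * χ * star U) := by
          rw [hUU, mul_one, hdχ, Matrix.mul_smul, Matrix.smul_mul]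
  refine ⟨?_, ?_, fun x => ?_, fun y hy => ?_⟩
  · calc U * χ * star U * (U * χ * star U) = U * (χ * (star U * U) * χ) * star U := by
          simp only [mul_assoc]
      _ = U * χ * star U := by rw [hUU, mul_one, hχχ]
  · exact isHermitian_iff_isSymm.mp (isHermitian_mul_mul_conjTranspose U (isHermitian_diagonal _))
  · rw [mulVec_mulVec, hAP, smul_mulVec]
  · have hdz : diagonal d *ᵥ (star U *ᵥ y) = μ • (star U *ᵥ y) := by
      have := congrArg (star U *ᵥ ·) hy
      simpa only [mulVec_mulVec, mulVec_smul, ← mul_assoc, hUU, one_mul] using this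
    have hχz : χ *ᵥ (star U *ᵥ y) = star U *ᵥ y := funext fun i => by
      have hi := congrFun hdz i
      simp only [mulVec_diagonal, Pi.smul_apply, smul_eq_mul] at hi
      simp only [χ, mulVec_diagonal]
      split_ifs with h
      · rw [one_mul]
      · exact (zero_mul _).trans ((mul_eq_mul_right_iff.mp hi).resolve_left h).symm
    rw [← mulVec_mulVec, ← mulVec_mulVec, hχz, mulVec_mulVec, (mem_unitaryGroup_iff).mp hU,
      one_mulVec]

theorem Matrix.IsHermitian.eq_of_forall_isEigenProjection [DecidableEq V] (hA : A.IsHermitian)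
    {x y : V → ℝ} (h : ∀ μ E, IsEigenProjection A μ E → E *ᵥ x = E *ᵥ y) : x = y := by
  obtain ⟨U, hU, d, hA'⟩ : ∃ U ∈ unitaryGroup V ℝ, ∃ d, A = U * diagonal d * star U :=
    ⟨_, hA.eigenvectorUnitary.2, _, by conv_lhs => rw [hA.spectral_theorem]; simp⟩
  have hUU : star U * U = 1 := (mem_unitaryGroup_iff').mp hU
  -- `Uᴴ E = χ Uᴴ` for the projection `E` of eigenvalue `d i`, and `χ i i = 1`
  have hcoord : star U *ᵥ x = star U *ᵥ y := funext fun i => by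
    have hi := congrArg (fun z => (star U *ᵥ z) i)
      (h _ _ (isEigenProjection_unitary_mul_diagonal_mul_star hU hA' (d i)))
    simp only [mulVec_mulVec, ← mul_assoc, hUU, one_mul] at hi
    simpa only [← mulVec_mulVec, mulVec_diagonal, if_pos, one_mul] using hi
  simpa only [mulVec_mulVec, (mem_unitaryGroup_iff).mp hU, one_mulVec] using
    congrArg (U *ᵥ ·) hcoord

end EigenProjection

namespace StronglyCospectral

variable {V : Type*} [Fintype V] [DecidableEq V] {A : Matrix V V ℝ} {u v w : V}

theorem refl (u : V) : StronglyCospectral A u u := fun _ _ _ => .inl rfl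

theorem trans (huv : StronglyCospectral A u v) (hvw : StronglyCospectral A v w) :
    StronglyCospectral A u w := fun μ E hE => by
  rcases huv μ E hE with h | h <;> rcases hvw μ E hE with h' | h' <;> simp [h, h']

theorem map_equiv {σ : V ≃ V} (hσ : A.submatrix σ σ = A) (h : StronglyCospectral A u v) :
    StronglyCospectral A (σ u) (σ v) := fun μ E hE => by
  rw [hE.mulVec_single_equiv hσ, hE.mulVec_single_equiv hσ]
  rcases h μ E hE with h | h <;> simp [h, Pi.neg_comp]

theorem apply_apply_eq (hA : A.IsHermitian) {σ : V ≃ V} (hσ : A.submatrix σ σ = A)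
    (h : StronglyCospectral A u (σ u)) : σ (σ u) = u := by
  have hsingle : (Pi.single (σ (σ u)) 1 : V → ℝ) = Pi.single u 1 :=
    hA.eq_of_forall_isEigenProjection fun μ E hE => by
      rw [hE.mulVec_single_equiv hσ (σ u)]
      rcases h μ E hE with h | h
      · rw [← h, ← hE.mulVec_single_equiv hσ, h]
      · rw [neg_eq_iff_eq_neg.mp h.symm, Pi.neg_comp, ← hE.mulVec_single_equiv hσ, h]
  simpa [Pi.single_apply, eq_comm] using congrFun hsingle u

end StronglyCospectral

theorem Subgroup.card_le_of_isPGroup {G : Type*} [Group G] [Finite G] {p d m : ℕ}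
    (hp : p.Prime) (H : Subgroup G) (hH : IsPGroup p H) (hcard : Nat.card G = p ^ d * m)
    (hm : p.Coprime m) : Nat.card H ≤ p ^ d := by
  have := Fact.mk hp
  obtain ⟨n, hn⟩ := IsPGroup.iff_card.mp hH
  have hdvd : p ^ n ∣ p ^ d * m := hn ▸ hcard ▸ H.card_subgroup_dvd_card
  rw [hn]
  exact Nat.le_of_dvd (pow_pos hp.pos d) ((Nat.Coprime.pow_left n hm).dvd_of_dvd_mul_right hdvd)

theorem Subgroup.card_finset_le_of_mul_inv_mem {G : Type*} [Group G] [Finite G] (H : Subgroup G)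
    (S : Finset G) (g : G) (hS : ∀ v ∈ S, v * g⁻¹ ∈ H) : S.card ≤ Nat.card H := by
  rw [← Nat.card_eq_finsetCard]
  exact Nat.card_le_card_of_injective (fun v => ⟨v * g⁻¹, hS v v.2⟩)
    fun a b hab => Subtype.ext (mul_right_cancel (congrArg Subtype.val hab))

section Cayley

variable {G : Type*} [Group G] [Fintype G] [DecidableEq G] {C : Finset G}

theorem cayleyAdj_isHermitian (hinv : ∀ c ∈ C, c⁻¹ ∈ C) : (cayleyAdj C).IsHermitian := by
  refine isHermitian_iff_isSymm.mpr (IsSymm.ext fun g h => ?_)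
  have hiff : g * h⁻¹ ∈ C ↔ h * g⁻¹ ∈ C :=
    ⟨fun hc => by simpa using hinv _ hc, fun hc => by simpa using hinv _ hc⟩
  simp [cayleyAdj, hiff]

theorem cayleyAdj_submatrix_mulRight (w : G) :
    (cayleyAdj C).submatrix (Equiv.mulRight w) (Equiv.mulRight w) = cayleyAdj C := by
  ext g h
  simp [cayleyAdj, mul_assoc]

theorem cayleyAdj_submatrix_mulLeft (hnorm : ∀ x : G, ∀ c ∈ C, x⁻¹ * c * x ∈ C) (w : G) :
    (cayleyAdj C).submatrix (Equiv.mulLeft w) (Equiv.mulLeft w) = cayleyAdj C := by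
  ext g h
  have hiff : w * h * (g⁻¹ * w⁻¹) ∈ C ↔ h * g⁻¹ ∈ C := by
    constructor <;> intro hc
    · simpa [mul_assoc] using hnorm w _ hc
    · simpa [mul_assoc] using hnorm w⁻¹ _ hc
  simp [cayleyAdj, hiff]

end Cayley

section CayleySubgroup

variable {G : Type*} [Group G] [Fintype G] [DecidableEq G] {C : Finset G}

theorem StronglyCospectral.cayleyAdj_one_mul {v w : G} (hv : StronglyCospectral (cayleyAdj C) 1 v)
    (hw : StronglyCospectral (cayleyAdj C) 1 w) : StronglyCospectral (cayleyAdj C) 1 (v * w) :=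
  hw.trans (by simpa using hv.map_equiv (cayleyAdj_submatrix_mulRight w))

theorem StronglyCospectral.cayleyAdj_mul_self (hinv : ∀ c ∈ C, c⁻¹ ∈ C)
    (hnorm : ∀ x : G, ∀ c ∈ C, x⁻¹ * c * x ∈ C) {v : G}
    (hv : StronglyCospectral (cayleyAdj C) 1 v) : v * v = 1 := by
  simpa using StronglyCospectral.apply_apply_eq (cayleyAdj_isHermitian hinv) (u := 1)
    (cayleyAdj_submatrix_mulLeft hnorm v) (by simpa using hv)

def cayleyCospectralSubgroup (hinv : ∀ c ∈ C, c⁻¹ ∈ C)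
    (hnorm : ∀ x : G, ∀ c ∈ C, x⁻¹ * c * x ∈ C) : Subgroup G where
  carrier := {v | StronglyCospectral (cayleyAdj C) 1 v}
  one_mem' := .refl 1
  mul_mem' := StronglyCospectral.cayleyAdj_one_mul
  inv_mem' {v} hv := by
    rwa [inv_eq_of_mul_eq_one_right (StronglyCospectral.cayleyAdj_mul_self hinv hnorm hv)]

theorem mem_cayleyCospectralSubgroup {hinv : ∀ c ∈ C, c⁻¹ ∈ C}
    {hnorm : ∀ x : G, ∀ c ∈ C, x⁻¹ * c * x ∈ C} {v : G} :
    v ∈ cayleyCospectralSubgroup hinv hnorm ↔ StronglyCospectral (cayleyAdj C) 1 v :=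
  Iff.rfl

theorem isPGroup_two_cayleyCospectralSubgroup (hinv : ∀ c ∈ C, c⁻¹ ∈ C)
    (hnorm : ∀ x : G, ∀ c ∈ C, x⁻¹ * c * x ∈ C) :
    IsPGroup 2 (cayleyCospectralSubgroup hinv hnorm) := fun v =>
  ⟨1, Subtype.ext (by simpa [sq] using StronglyCospectral.cayleyAdj_mul_self hinv hnorm v.2)⟩

end CayleySubgroup

theorem stmt8_general {G : Type*} [Group G] [Fintype G] [DecidableEq G] (d m : ℕ)
    (hcard : Fintype.card G = 2 ^ d * m) (hm : Odd m)
    (C : Finset G) (hinv : ∀ c ∈ C, c⁻¹ ∈ C)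
    (hnorm : ∀ x : G, ∀ c ∈ C, x⁻¹ * c * x ∈ C)
    (S : Finset G) (hS : ∀ u ∈ S, ∀ v ∈ S, StronglyCospectral (cayleyAdj C) u v) :
    S.card ≤ 2 ^ d := by
  obtain rfl | ⟨g, hg⟩ := S.eq_empty_or_nonempty
  · simp
  set H := cayleyCospectralSubgroup hinv hnorm
  calc S.card ≤ Nat.card H := H.card_finset_le_of_mul_inv_mem S g fun v hv =>
        mem_cayleyCospectralSubgroup.mpr <| by
          simpa using (hS g hg v hv).map_equiv (cayleyAdj_submatrix_mulRight g⁻¹)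
    _ ≤ 2 ^ d := H.card_le_of_isPGroup Nat.prime_two
        (isPGroup_two_cayleyCospectralSubgroup hinv hnorm)
        (by rw [Nat.card_eq_fintype_card, hcard]) (Nat.coprime_two_left.mpr hm)

theorem stmt8 {G : Type*} [Group G] [Fintype G] [DecidableEq G] (d m : ℕ)
    (hcard : Fintype.card G = 2 ^ d * m) (hm : Odd m)
    (C : Finset G) (h1 : (1 : G) ∉ C) (hinv : ∀ c ∈ C, c⁻¹ ∈ C)
    (hnorm : ∀ x : G, ∀ c ∈ C, x⁻¹ * c * x ∈ C)
    (S : Finset G) (hS : ∀ u ∈ S, ∀ v ∈ S, StronglyCospectral (cayleyAdj C) u v) :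
    S.card ≤ 2 ^ d :=
  stmt8_general d m hcard hm C hinv hnorm S hS
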